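/- If X has RTGLE(α,β,γ,p) distribution with β > 0, then the first-moment recurrence (β/2)·E[X²] + α·E[X] = (1 + p/γ)·Γ(1/γ + 1) holds, and consequently Var(X) = (2/β)·[(1 + p/γ)·Γ(1/γ + 1) - α·E[X]] - (E[X])². -/

import Mathlib

open MeasureTheory

/-- The RTGLE probability density function. -/
noncomputable def rtglePDF (α β γ p : ℝ) (x : ℝ) : ℝ :=
  γ * (α + β * x) * (α * x + β * x ^ 2 / 2) ^ (γ - 1) *
    (1 - p + p * (α * x + β * x ^ 2 / 2) ^ γ) *
    Real.exp (-(α * x + β * x ^ 2 / 2) ^ γ)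

/-!
Writing `H(x) = (αx + βx²/2)^γ`, the density is `H'(x) (1 - p + p H(x)) e^{-H(x)}`, and `H` is an
increasing bijection of `(0, ∞)`. Substituting `s = H(x)` turns
`E[(αX + βX²/2)^r] = E[H(X)^{r/γ}]` into `∫₀^∞ s^{r/γ} (1 - p + p s) e^{-s} ds
= (1 - p) Γ(r/γ + 1) + p Γ(r/γ + 2) = (1 + p r/γ) Γ(r/γ + 1)`.
For `r = 1` the left side is `(β/2) E[X²] + α E[X]` by linearity, and the variance formula is
algebra.
-/

open Set Filter Topology

theorem image_Ioi_eq_Ioi_of_strictMonoOn {f : ℝ → ℝ} {a : ℝ} (hcont : ContinuousOn f (Ici a))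
    (hmono : StrictMonoOn f (Ici a)) (htop : Tendsto f atTop atTop) :
    f '' Ioi a = Ioi (f a) := by
  refine Subset.antisymm ?_ fun y hy => ?_
  · rintro _ ⟨x, hx, rfl⟩
    exact hmono self_mem_Ici (Ioi_subset_Ici_self hx) hx
  · obtain ⟨b, hby, hab⟩ := ((htop.eventually_gt_atTop y).and (eventually_ge_atTop a)).exists
    obtain ⟨x, hx, rfl⟩ := intermediate_value_Ioc hab (hcont.mono Icc_subset_Ici_self) ⟨hy, hby.le⟩
    exact ⟨x, hx.1, rfl⟩

theorem Real.integral_rpow_mul_affine_mul_exp_neg {a : ℝ} (ha : -1 < a) (p : ℝ) :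
    ∫ s in Ioi (0 : ℝ), s ^ a * (1 - p + p * s) * Real.exp (-s)
      = (1 + p * a) * Real.Gamma (a + 1) := by
  have ha₁ : 0 < a + 1 := by linarith
  have ha₂ : 0 < a + 2 := by linarith
  have hsplit : ∀ s ∈ Ioi (0 : ℝ), s ^ a * (1 - p + p * s) * Real.exp (-s)
      = (1 - p) * (Real.exp (-s) * s ^ (a + 1 - 1)) + p * (Real.exp (-s) * s ^ (a + 2 - 1)) := by
    intro s hs
    rw [add_sub_cancel_right, show a + 2 - 1 = a + 1 by ring, Real.rpow_add_one (ne_of_gt hs)]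
    ring
  rw [setIntegral_congr_fun measurableSet_Ioi hsplit,
    integral_add ((Real.GammaIntegral_convergent ha₁).const_mul _)
      ((Real.GammaIntegral_convergent ha₂).const_mul _),
    integral_const_mul, integral_const_mul, ← Real.Gamma_eq_integral ha₁,
    ← Real.Gamma_eq_integral ha₂, show a + 2 = a + 1 + 1 by ring,
    Real.Gamma_add_one ha₁.ne']
  ring

/-- The cumulative hazard of the generalized linear exponential distribution. -/
noncomputable def gleCumHazard (α β γ x : ℝ) : ℝ :=
  (α * x + β * x ^ 2 / 2) ^ γ

section CumHazard

variable {α β γ : ℝ}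

theorem linear_add_quadratic_pos (hα : 0 ≤ α) (hβ : 0 < β) {x : ℝ} (hx : 0 < x) :
    0 < α * x + β * x ^ 2 / 2 := by
  have := mul_nonneg hα hx.le
  positivity

theorem hasDerivAt_gleCumHazard {x : ℝ} (hx : 0 < α * x + β * x ^ 2 / 2) :
    HasDerivAt (gleCumHazard α β γ) (γ * (α + β * x) * (α * x + β * x ^ 2 / 2) ^ (γ - 1)) x := by
  have hquad : HasDerivAt (fun y => α * y + β * y ^ 2 / 2) (α + β * x) x :=
    (((hasDerivAt_id' x).const_mul α).add (((hasDerivAt_pow 2 x).const_mul β).div_const 2))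
      |>.congr_deriv (by push_cast; ring)
  exact (hquad.rpow_const (p := γ) (Or.inl hx.ne')).congr_deriv (by ring)

theorem strictMonoOn_gleCumHazard (hα : 0 ≤ α) (hβ : 0 < β) (hγ : 0 < γ) :
    StrictMonoOn (gleCumHazard α β γ) (Ici 0) := by
  intro x hx y hy hxy
  have hx : (0 : ℝ) ≤ x := hx
  have hquad : α * x + β * x ^ 2 / 2 < α * y + β * y ^ 2 / 2 := by
    have := mul_le_mul_of_nonneg_left hxy.le hα
    have := mul_lt_mul_of_pos_left (pow_lt_pow_left₀ hxy hx two_ne_zero) hβ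
    linarith
  exact Real.rpow_lt_rpow (by positivity) hquad hγ

theorem continuous_gleCumHazard (hγ : 0 < γ) : Continuous (gleCumHazard α β γ) :=
  (by fun_prop : Continuous fun x : ℝ => α * x + β * x ^ 2 / 2).rpow_const
    fun _ => Or.inr hγ.le

theorem tendsto_gleCumHazard_atTop (hα : 0 ≤ α) (hβ : 0 < β) (hγ : 0 < γ) :
    Tendsto (gleCumHazard α β γ) atTop atTop := by
  have hsq : Tendsto (fun x : ℝ => β * x ^ 2 / 2) atTop atTop :=
    ((tendsto_pow_atTop two_ne_zero).const_mul_atTop hβ).atTop_div_const two_pos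
  have hquad : Tendsto (fun x : ℝ => α * x + β * x ^ 2 / 2) atTop atTop := by
    refine tendsto_atTop_mono' _ ?_ hsq
    filter_upwards [eventually_ge_atTop 0] with x hx
    linarith [mul_nonneg hα hx]
  exact (tendsto_rpow_atTop hγ).comp hquad

theorem gleCumHazard_image_Ioi (hα : 0 ≤ α) (hβ : 0 < β) (hγ : 0 < γ) :
    gleCumHazard α β γ '' Ioi 0 = Ioi 0 := by
  rw [image_Ioi_eq_Ioi_of_strictMonoOn (continuous_gleCumHazard hγ).continuousOn
    (strictMonoOn_gleCumHazard hα hβ hγ) (tendsto_gleCumHazard_atTop hα hβ hγ)]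
  simp [gleCumHazard, Real.zero_rpow hγ.ne']

end CumHazard

theorem integral_rpow_mul_rtglePDF {α β γ : ℝ} (hα : 0 ≤ α) (hβ : 0 < β) (hγ : 0 < γ)
    (p : ℝ) {r : ℝ} (hr : -1 < r / γ) :
    ∫ x in Ioi (0 : ℝ), (α * x + β * x ^ 2 / 2) ^ r * rtglePDF α β γ p x
      = (1 + p * (r / γ)) * Real.Gamma (r / γ + 1) := by
  set H := gleCumHazard α β γ with hH
  set H' := fun x : ℝ => γ * (α + β * x) * (α * x + β * x ^ 2 / 2) ^ (γ - 1)
  have hH' : ∀ x ∈ Ioi (0 : ℝ), HasDerivWithinAt H (H' x) (Ioi 0) x := fun x hx =>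
    (hasDerivAt_gleCumHazard (linear_add_quadratic_pos hα hβ hx)).hasDerivWithinAt
  have hsubst : ∀ x ∈ Ioi (0 : ℝ), (α * x + β * x ^ 2 / 2) ^ r * rtglePDF α β γ p x
      = H' x • (H x ^ (r / γ) * (1 - p + p * H x) * Real.exp (-H x)) := by
    intro x hx
    have hpow : H x ^ (r / γ) = (α * x + β * x ^ 2 / 2) ^ r := by
      rw [hH, gleCumHazard, ← Real.rpow_mul (linear_add_quadratic_pos hα hβ hx).le,
        mul_div_cancel₀ r hγ.ne']
    rw [hpow, smul_eq_mul, rtglePDF, hH, gleCumHazard]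
    ring
  rw [setIntegral_congr_fun measurableSet_Ioi hsubst,
    ← integral_image_eq_integral_deriv_smul_of_monotoneOn measurableSet_Ioi hH'
      ((strictMonoOn_gleCumHazard hα hβ hγ).monotoneOn.mono Ioi_subset_Ici_self)
      (fun s => s ^ (r / γ) * (1 - p + p * s) * Real.exp (-s)),
    gleCumHazard_image_Ioi hα hβ hγ, Real.integral_rpow_mul_affine_mul_exp_neg hr]

theorem rtgle_moment_recurrence_and_variance_general (α β γ p : ℝ)
    (hα : 0 ≤ α) (hβ : 0 < β) (hγ : 0 < γ)
    (hI1 : IntegrableOn (fun x => x * rtglePDF α β γ p x) (Set.Ioi 0))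
    (hI2 : IntegrableOn (fun x => x ^ 2 * rtglePDF α β γ p x) (Set.Ioi 0)) :
    (β / 2) * (∫ x in Set.Ioi (0 : ℝ), x ^ 2 * rtglePDF α β γ p x) +
        α * (∫ x in Set.Ioi (0 : ℝ), x * rtglePDF α β γ p x)
      = (1 + p / γ) * Real.Gamma (1 / γ + 1) ∧
    (∫ x in Set.Ioi (0 : ℝ), x ^ 2 * rtglePDF α β γ p x) -
        (∫ x in Set.Ioi (0 : ℝ), x * rtglePDF α β γ p x) ^ 2
      = (2 / β) * ((1 + p / γ) * Real.Gamma (1 / γ + 1) -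
          α * (∫ x in Set.Ioi (0 : ℝ), x * rtglePDF α β γ p x)) -
        (∫ x in Set.Ioi (0 : ℝ), x * rtglePDF α β γ p x) ^ 2 := by
  have hfirst := integral_rpow_mul_rtglePDF hα hβ hγ p (r := 1)
    (lt_of_lt_of_le neg_one_lt_zero (by positivity))
  simp only [Real.rpow_one, ← div_eq_mul_one_div] at hfirst
  have hlinear : ∫ x in Ioi (0 : ℝ), (α * x + β * x ^ 2 / 2) * rtglePDF α β γ p x
      = (β / 2) * (∫ x in Ioi (0 : ℝ), x ^ 2 * rtglePDF α β γ p x) +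
        α * (∫ x in Ioi (0 : ℝ), x * rtglePDF α β γ p x) := by
    rw [← integral_const_mul, ← integral_const_mul, ← integral_add (hI2.const_mul _)
      (hI1.const_mul _)]
    congr 1 with x
    ring
  have hrecurrence := hlinear.symm.trans hfirst
  refine ⟨hrecurrence, ?_⟩
  rw [← hrecurrence]
  field_simp
  ring

/-- First-moment recurrence `(β/2)E[X²] + αE[X] = (1 + p/γ)Γ(1/γ + 1)` for
`X ∼ RTGLE(α,β,γ,p)` with `β > 0`, and the resulting variance formula
`Var(X) = (2/β)[(1 + p/γ)Γ(1/γ+1) - αE[X]] - (E[X])²`. -/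
theorem rtgle_moment_recurrence_and_variance (α β γ p : ℝ)
    (hα : 0 ≤ α) (hβ : 0 < β) (hγ : 0 < γ) (hp0 : 0 ≤ p) (hp1 : p ≤ 1)
    (hI1 : IntegrableOn (fun x => x * rtglePDF α β γ p x) (Set.Ioi 0))
    (hI2 : IntegrableOn (fun x => x ^ 2 * rtglePDF α β γ p x) (Set.Ioi 0)) :
    (β / 2) * (∫ x in Set.Ioi (0 : ℝ), x ^ 2 * rtglePDF α β γ p x) +
        α * (∫ x in Set.Ioi (0 : ℝ), x * rtglePDF α β γ p x)
      = (1 + p / γ) * Real.Gamma (1 / γ + 1) ∧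
    (∫ x in Set.Ioi (0 : ℝ), x ^ 2 * rtglePDF α β γ p x) -
        (∫ x in Set.Ioi (0 : ℝ), x * rtglePDF α β γ p x) ^ 2
      = (2 / β) * ((1 + p / γ) * Real.Gamma (1 / γ + 1) -
          α * (∫ x in Set.Ioi (0 : ℝ), x * rtglePDF α β γ p x)) -
        (∫ x in Set.Ioi (0 : ℝ), x * rtglePDF α β γ p x) ^ 2 :=
  rtgle_moment_recurrence_and_variance_general α β γ p hα hβ hγ hI1 hI2
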